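/- Let a = p/q > 1 be rational, let A, B be nonnegative integers not both zero, let k ≥ 1 be the number of lattice points on the slant edge of T^a_{A,B} (the segment where x + a·y = A + a·B, x ≥ 0, y ≥ 0), and let (A₀,B₀) be the lattice point on the slant edge with smallest x-coordinate. Then there exists ε > 0 such that for every irrational z with a − ε < z < a, #(T^z_{A₀,B₀} ∩ ℤ²) = #(T^a_{A,B} ∩ ℤ²) − (k − 1). -/

import Mathlib

/-- The number of lattice points in the triangle `T^a_{A,B} = {(x,y) : x ≥ 0, y ≥ 0, x + a·y ≤ A + a·B}`. -/
noncomputable def latticeCount (a : ℝ) (A B : ℕ) : ℕ :=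
  Set.ncard {xy : ℤ × ℤ | 0 ≤ xy.1 ∧ 0 ≤ xy.2 ∧ (xy.1 : ℝ) + a * xy.2 ≤ (A : ℝ) + a * B}

/-- The smallest positive integer `d` such that `#(T^a_{A,B} ∩ ℤ²) ≤ (d+1)(d+2)/2`
(stated multiplied by 2 to avoid division). -/
noncomputable def ddeg (a : ℝ) (A B : ℕ) : ℕ :=
  sInf {d : ℕ | 0 < d ∧ 2 * latticeCount a A B ≤ (d+1)*(d+2)}

/-- `k_{A,B}(a) := (A + a·B) / d^a_{A,B}`. -/
noncomputable def kABval (a : ℝ) (A B : ℕ) : ℝ := ((A : ℝ) + a * B) / (ddeg a A B)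

/-- The number of lattice points on the slant edge `{x + a·y = A + a·B, x ≥ 0, y ≥ 0}`
of the triangle `T^a_{A,B}`. -/
noncomputable def slantCount (a : ℝ) (A B : ℕ) : ℕ :=
  Set.ncard {xy : ℤ × ℤ | 0 ≤ xy.1 ∧ 0 ≤ xy.2 ∧ (xy.1 : ℝ) + a * xy.2 = (A : ℝ) + a * B}

/-!
Write `a = p/q` and `N = A + a·B`. The values of `x + a·y` at lattice points lie in `(1/q)ℤ`, so
off the slant edge they are at distance at least `1/q` from `N`. Replacing the slant edge by the
line of slope `z` through `(A₀, B₀)` shifts the test `x + a·y ≤ N` by `(a - z)(y - B₀)`, which on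
the bounded triangles is smaller than `1/q` once `z` is close to `a`. So the lattice points strictly
below the edge stay inside, while every other edge point has `x > A₀`, hence `y < B₀`, and drops out.
-/

open Filter Topology

namespace LatticeTriangle

def triangle (a N : ℝ) : Set (ℤ × ℤ) :=
  {xy | 0 ≤ xy.1 ∧ 0 ≤ xy.2 ∧ (xy.1 : ℝ) + a * xy.2 ≤ N}

def slantEdge (a N : ℝ) : Set (ℤ × ℤ) :=
  {xy | 0 ≤ xy.1 ∧ 0 ≤ xy.2 ∧ (xy.1 : ℝ) + a * xy.2 = N}

variable {a N : ℝ}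

theorem slantEdge_subset_triangle : slantEdge a N ⊆ triangle a N :=
  fun _ ⟨hx, hy, h⟩ ↦ ⟨hx, hy, h.le⟩

theorem triangle_finite (ha : 0 < a) : (triangle a N).Finite := by
  refine (Set.finite_Icc ((0 : ℤ), (0 : ℤ)) (⌈N⌉, ⌈N / a⌉)).subset ?_
  rintro ⟨x, y⟩ ⟨hx, hy, hle⟩
  have hx' : (0 : ℝ) ≤ x := by exact_mod_cast hx
  have hy' : (0 : ℝ) ≤ y := by exact_mod_cast hy
  have hxN : (x : ℝ) ≤ N := by nlinarith
  have hyN : (y : ℝ) ≤ N / a := by rw [le_div_iff₀ ha]; linarith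
  exact ⟨⟨hx, hy⟩, Int.le_ceil_iff.2 (by linarith), Int.le_ceil_iff.2 (by linarith)⟩

theorem inv_le_abs_sub_of_ne {p : ℤ} {q : ℕ} (hq : 0 < q) {x y x' y' : ℤ}
    (h : (x : ℝ) + p / q * y ≠ x' + p / q * y') :
    1 / (q : ℝ) ≤ |(x : ℝ) + p / q * y - (x' + p / q * y')| := by
  have hq' : (0 : ℝ) < q := by exact_mod_cast hq
  set m : ℤ := q * (x - x') + p * (y - y')
  have hm : (x : ℝ) + p / q * y - (x' + p / q * y') = m / q := by
    simp only [m]; push_cast; field_simp; ring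
  have hm0 : m ≠ 0 := by
    rintro h0
    exact h (sub_eq_zero.1 (by rw [hm, h0, Int.cast_zero, zero_div]))
  rw [hm, abs_div, Nat.abs_cast, div_le_div_iff_of_pos_right hq']
  exact_mod_cast Int.one_le_abs hm0

theorem abs_sub_mul_sub_lt {g z y y₀ : ℝ} (hza : z < a) (hsmall : (a - z) * (N / z) < g)
    (hy : 0 ≤ y) (hyN : y ≤ N / z) (hy₀ : 0 ≤ y₀) (hy₀N : y₀ ≤ N / z) :
    |(a - z) * (y - y₀)| < g := by
  rw [abs_mul, abs_of_pos (sub_pos.2 hza)]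
  exact (mul_le_mul_of_nonneg_left (abs_sub_le_of_nonneg_of_le hy hyN hy₀ hy₀N)
    (sub_pos.2 hza).le).trans_lt hsmall

theorem triangle_tilt_eq {g z : ℝ} (ha : 0 < a)
    (hgap : ∀ xy : ℤ × ℤ, (xy.1 : ℝ) + a * xy.2 ≠ N → g ≤ |(xy.1 : ℝ) + a * xy.2 - N|)
    {x₀ y₀ : ℤ} (hc : (x₀, y₀) ∈ slantEdge a N) (hmin : ∀ xy ∈ slantEdge a N, x₀ ≤ xy.1)
    (hz : 0 < z) (hza : z < a) (hsmall : (a - z) * (N / z) < g) :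
    triangle z (x₀ + z * y₀) = triangle a N \ (slantEdge a N \ {(x₀, y₀)}) := by
  obtain ⟨hx₀, hy₀, hc⟩ := hc
  have hy₀' : (0 : ℝ) ≤ y₀ := by exact_mod_cast hy₀
  have hx₀' : (0 : ℝ) ≤ x₀ := by exact_mod_cast hx₀
  have hy₀N : (y₀ : ℝ) ≤ N / z := by rw [le_div_iff₀ hz]; nlinarith
  ext ⟨x, y⟩
  have htilt_iff : ((x : ℝ) + z * y ≤ x₀ + z * y₀) ↔ (x + a * y - N ≤ (a - z) * (y - y₀)) := by
    constructor <;> intro h <;> linarith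
  simp only [triangle, slantEdge, Set.mem_ofPred_eq, Set.mem_sdiff,
    Set.mem_singleton_iff, htilt_iff, not_and, not_not]
  constructor
  · rintro ⟨hx, hy, hle⟩
    have hy' : (0 : ℝ) ≤ y := by exact_mod_cast hy
    have hyN : (y : ℝ) ≤ N / z := by
      rw [le_div_iff₀ hz]
      nlinarith [mul_le_mul_of_nonneg_right hza.le hy₀', (by exact_mod_cast hx : (0 : ℝ) ≤ x)]
    have hD := abs_lt.1 (abs_sub_mul_sub_lt hza hsmall hy' hyN hy₀' hy₀N)
    have hL : (x : ℝ) + a * y ≤ N := by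
      by_contra! hL
      have := hgap (x, y) hL.ne'
      rw [abs_of_pos (sub_pos.2 hL)] at this
      linarith
    refine ⟨⟨hx, hy, hL⟩, fun ⟨_, _, hedge⟩ ↦ ?_⟩
    have hyy₀ : (y₀ : ℝ) ≤ y := by
      have := (mul_nonneg_iff_of_pos_left (sub_pos.2 hza)).1 (by linarith : 0 ≤ (a - z) * (y - y₀))
      linarith
    have hxx₀ : (x₀ : ℝ) ≤ x := by exact_mod_cast hmin (x, y) ⟨hx, hy, hedge⟩
    have hyy₀' : (y : ℝ) ≤ y₀ := le_of_mul_le_mul_left (by linarith) ha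
    have hy_eq : y = y₀ := by exact_mod_cast le_antisymm hyy₀' hyy₀
    subst hy_eq
    rw [show x = x₀ by exact_mod_cast (by linarith : (x : ℝ) = x₀)]
  · rintro ⟨⟨hx, hy, hle⟩, hedge⟩
    refine ⟨hx, hy, ?_⟩
    rcases hle.lt_or_eq with hlt | heq
    · have hy' : (0 : ℝ) ≤ y := by exact_mod_cast hy
      have hyN : (y : ℝ) ≤ N / z := by
        rw [le_div_iff₀ hz]
        nlinarith [mul_le_mul_of_nonneg_right hza.le hy', (by exact_mod_cast hx : (0 : ℝ) ≤ x)]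
      have hD := abs_lt.1 (abs_sub_mul_sub_lt hza hsmall hy' hyN hy₀' hy₀N)
      have := hgap (x, y) hlt.ne
      rw [abs_of_neg (sub_neg.2 hlt)] at this
      linarith
    · obtain ⟨rfl, rfl⟩ := Prod.mk.inj (hedge ⟨hx, hy, heq⟩)
      simp [hc]

theorem eventually_tilt_small (ha : 0 < a) {g : ℝ} (hg : 0 < g) (N : ℝ) :
    ∀ᶠ z in 𝓝 a, 0 < z ∧ (a - z) * (N / z) < g := by
  refine (eventually_gt_nhds ha).and (ContinuousAt.eventually_lt ?_ continuousAt_const ?_)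
  · fun_prop (disch := exact ha.ne')
  · simpa using hg

end LatticeTriangle

open LatticeTriangle in
theorem lattice_count_left_perturbation_general (p q A B : ℕ) (hq : 0 < q) (hpq : q < p)
    (k : ℕ) (hk : k = slantCount ((p : ℝ)/q) A B)
    (A₀ B₀ : ℕ)
    (h₀ : (A₀ : ℝ) + ((p : ℝ)/q) * B₀ = (A : ℝ) + ((p : ℝ)/q) * B)
    (h₀min : ∀ x y : ℕ, (x : ℝ) + ((p : ℝ)/q) * y = (A : ℝ) + ((p : ℝ)/q) * B → A₀ ≤ x) :
    ∃ ε > (0 : ℝ), ∀ z : ℝ, Irrational z → (p : ℝ)/q - ε < z → z < (p : ℝ)/q →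
      latticeCount z A₀ B₀ = latticeCount ((p : ℝ)/q) A B - (k - 1) := by
  set a : ℝ := (p : ℝ) / q
  set N : ℝ := (A : ℝ) + a * B
  have ha : 0 < a := div_pos (by exact_mod_cast hq.trans hpq) (by exact_mod_cast hq)
  have hgap : ∀ xy : ℤ × ℤ, (xy.1 : ℝ) + a * xy.2 ≠ N →
      1 / (q : ℝ) ≤ |(xy.1 : ℝ) + a * xy.2 - N| := by
    intro xy h
    simpa using inv_le_abs_sub_of_ne (p := p) (x' := A) (y' := B) hq (by simpa using h)
  have hc : ((A₀ : ℤ), (B₀ : ℤ)) ∈ slantEdge a N := ⟨by positivity, by positivity, by simpa using h₀⟩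
  have hmin : ∀ xy ∈ slantEdge a N, (A₀ : ℤ) ≤ xy.1 := by
    rintro ⟨x, y⟩ ⟨hx, hy, hxy⟩
    lift x to ℕ using hx
    lift y to ℕ using hy
    exact Nat.cast_le.2 (h₀min x y (by exact_mod_cast hxy))
  obtain ⟨ε, hε, hsmall⟩ := Metric.eventually_nhds_iff.1
    (eventually_tilt_small ha (one_div_pos.2 (Nat.cast_pos.2 hq)) N)
  refine ⟨ε, hε, fun z _ hz₁ hz₂ ↦ ?_⟩
  obtain ⟨hz, hzN⟩ := hsmall <| show dist z a < ε by
    rw [Real.dist_eq, abs_sub_lt_iff]; constructor <;> linarith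
  have htilt := triangle_tilt_eq ha hgap hc hmin hz hz₂ hzN
  have hfin : (slantEdge a N \ {((A₀ : ℤ), (B₀ : ℤ))}).Finite :=
    (triangle_finite ha).subset (Set.sdiff_subset.trans slantEdge_subset_triangle)
  rw [hk]
  change (triangle z _).ncard = (triangle a N).ncard - ((slantEdge a N).ncard - 1)
  push_cast at htilt
  rw [htilt, Set.ncard_sdiff (Set.sdiff_subset.trans slantEdge_subset_triangle) hfin,
    Set.ncard_sdiff_singleton_of_mem hc]

/-- for rational `a = p/q > 1` and `(A,B) ≠ (0,0)`, if `k ≥ 1` is the number of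
lattice points on the slant edge of `T^a_{A,B}` and `(A₀,B₀)` is the lattice point on the
slant edge of smallest `x`-coordinate, then there is `ε > 0` such that for every irrational
`z ∈ (a−ε, a)` one has `#(T^z_{A₀,B₀} ∩ ℤ²) = #(T^a_{A,B} ∩ ℤ²) − (k−1)`. -/
theorem lattice_count_left_perturbation (p q A B : ℕ) (hq : 0 < q) (hpq : q < p)
    (hAB : ¬ (A = 0 ∧ B = 0))
    (k : ℕ) (hk1 : 1 ≤ k) (hk : k = slantCount ((p : ℝ)/q) A B)
    (A₀ B₀ : ℕ)
    (h₀ : (A₀ : ℝ) + ((p : ℝ)/q) * B₀ = (A : ℝ) + ((p : ℝ)/q) * B)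
    (h₀min : ∀ x y : ℕ, (x : ℝ) + ((p : ℝ)/q) * y = (A : ℝ) + ((p : ℝ)/q) * B → A₀ ≤ x) :
    ∃ ε > (0 : ℝ), ∀ z : ℝ, Irrational z → (p : ℝ)/q - ε < z → z < (p : ℝ)/q →
      latticeCount z A₀ B₀ = latticeCount ((p : ℝ)/q) A B - (k - 1) :=
  lattice_count_left_perturbation_general p q A B hq hpq k hk A₀ B₀ h₀ h₀min
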